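/- In the evolution algebra A over ℤ/4ℤ with basis (x_i)_{i≥1} and relations x_i·x_i = 2x_i + x_{i+1}, x_i·x_j = 0 for i ≠ j, if an element a = ∑_{1≤i≤t} a_i x_i is supported on the first t basis elements (i.e. a(i) = 0 for i > t), then the principal power a^{2t+2} = 0. In particular A is nil: every element of A has some vanishing principal power. -/
import Mathlib


/-!
The evolution algebra `A` over `R = ℤ/4ℤ` with basis `(x_i)_{i ≥ 1}` indexed by
`ℕ+` (underlying module `ℕ+ →₀ ZMod 4`, `x_i = Finsupp.single i 1`) and
relations `x_i · x_i = 2x_i + x_{i+1}`, `x_i · x_j = 0` for `i ≠ j`;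
concretely `(a · b) = ∑_i a(i) * b(i) • (2 • x_i + x_{i+1})`.
-/
noncomputable def evolMul {R : Type*} [CommRing R] {ι : Type*}
    (Csq : ι → ι →₀ R) (a b : ι →₀ R) : ι →₀ R :=
  a.sum fun i ai => (ai * b i) • Csq i

/-- The squares of the basis elements: `x_i · x_i = 2 • x_i + x_{i+1}`. -/
noncomputable def sqZ4 : ℕ+ → (ℕ+ →₀ ZMod 4) := fun i =>
  (2 : ZMod 4) • Finsupp.single i 1 + Finsupp.single (i + 1) 1

/-- Principal powers: `ppow mul a n = aⁿ` for `n ≥ 1`, defined by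
`a^1 = a` and `a^{n+1} = a^n · a`. -/
def ppow {A : Type*} (mul : A → A → A) (a : A) : ℕ → A
  | 0 => a
  | 1 => a
  | n + 2 => mul (ppow mul a (n + 1)) a

lemma mulA_apply (b a : ℕ+ →₀ ZMod 4) (j : ℕ+) :
    evolMul sqZ4 b a j =
      b.sum fun i bi => (bi * a i) * (2 * (if i = j then 1 else 0)
        + (if i + 1 = j then 1 else 0)) := by
  unfold evolMul sqZ4
  rw [Finsupp.sum_apply]
  congr 1
  ext i bi
  simp [Finsupp.single_apply, smul_eq_mul]
  split_ifs <;> ring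

lemma mulA_one (b a : ℕ+ →₀ ZMod 4) : evolMul sqZ4 b a 1 = 2 * (b 1 * a 1) := by
  rw [mulA_apply]
  have h1 : ∀ i : ℕ+, i + 1 ≠ (1 : ℕ+) := by
    intro i h
    have := congrArg (fun x : ℕ+ => (x : ℕ)) h
    simp at this
  have : (b.sum fun i bi => (bi * a i) * (2 * (if i = 1 then 1 else 0)
        + (if i + 1 = 1 then 1 else 0)))
      = b.sum fun i bi => if i = 1 then 2 * (bi * a i) else 0 := by
    congr 1
    ext i bi
    rw [if_neg (h1 i)]
    split_ifs <;> ring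
  rw [this, Finsupp.sum_ite_eq' b 1 (fun i bi => 2 * (bi * a i))]
  split_ifs with h
  · rfl
  · rw [Finsupp.notMem_support_iff.mp h]; ring

lemma mulA_succ (b a : ℕ+ →₀ ZMod 4) (p : ℕ+) :
    evolMul sqZ4 b a (p + 1) = 2 * (b (p+1) * a (p+1)) + b p * a p := by
  rw [mulA_apply]
  have : (b.sum fun i bi => (bi * a i) * (2 * (if i = p + 1 then 1 else 0)
        + (if i + 1 = p + 1 then 1 else 0)))
      = b.sum fun i bi => (if i = p + 1 then 2 * (bi * a i) else 0)
        + (if i = p then bi * a i else 0) := by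
    congr 1
    ext i bi
    simp only [add_left_inj]
    split_ifs with h1 h2
    · exfalso; subst h2; exact absurd (congrArg PNat.val h1) (by simp)
    all_goals ring
  rw [this, Finsupp.sum_add]
  rw [Finsupp.sum_ite_eq' b (p+1) (fun i bi => 2 * (bi * a i)),
    Finsupp.sum_ite_eq' b p (fun i bi => bi * a i)]
  split_ifs with h1 h2 h3 <;>
    simp_all [Finsupp.notMem_support_iff] <;> ring

lemma pnat_cases (j : ℕ+) : j = 1 ∨ ∃ p : ℕ+, j = p + 1 := by
  rcases j with ⟨n, hn⟩
  match n, hn with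
  | 1, _ => exact Or.inl rfl
  | (m+2), _ => exact Or.inr ⟨⟨m+1, m.succ_pos⟩, rfl⟩

lemma z4 : ∀ x y : ZMod 4, 2 * (2 * x * y) = 0 := by decide

lemma coe_succ (p : ℕ+) : ((p + 1 : ℕ+) : ℕ) = (p : ℕ) + 1 := rfl

lemma step1 (c a : ℕ+ →₀ ZMod 4) (k : ℕ) (hc : ∀ j : ℕ+, (j : ℕ) ≤ k → c j = 0) :
    ∀ j : ℕ+, (j : ℕ) ≤ k → evolMul sqZ4 c a j = 0 := by
  intro j hj
  rcases pnat_cases j with h | ⟨p, h⟩ <;> subst h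
  · rw [mulA_one, hc 1 hj]; ring
  · have hp : (p : ℕ) ≤ k := by rw [coe_succ] at hj; omega
    rw [mulA_succ, hc (p+1) hj, hc p hp]; ring

lemma step2 (c a : ℕ+ →₀ ZMod 4) (k : ℕ) (hc : ∀ j : ℕ+, (j : ℕ) ≤ k → c j = 0) :
    ∀ j : ℕ+, (j : ℕ) ≤ k + 1 → evolMul sqZ4 (evolMul sqZ4 c a) a j = 0 := by
  intro j hj
  rcases pnat_cases j with h | ⟨p, h⟩ <;> subst h
  · rw [mulA_one, mulA_one]; exact z4 _ _
  · have hp : (p : ℕ) ≤ k := by rw [coe_succ] at hj; omega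
    rw [mulA_succ, step1 c a k hc p hp, mulA_succ, hc p hp]
    simp only [zero_mul, add_zero]
    exact z4 _ _

lemma L1 (k : ℕ) (a : ℕ+ →₀ ZMod 4) :
    ∀ j : ℕ+, (j : ℕ) ≤ k → ppow (evolMul sqZ4) a (2 * k + 1) j = 0 := by
  induction k with
  | zero => intro j hj; exact absurd hj (by have := j.pos; omega)
  | succ k ih =>
    intro j hj
    rw [show 2 * (k+1) + 1 = (2*k+1) + 2 by ring]
    have e2 : ppow (evolMul sqZ4) a ((2*k+1) + 2)
        = evolMul sqZ4 (evolMul sqZ4 (ppow (evolMul sqZ4) a (2*k+1)) a) a := rfl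
    rw [e2]
    exact step2 _ a k ih j hj

lemma part1 (t : ℕ) (a : ℕ+ →₀ ZMod 4) (ha : ∀ i : ℕ+, t < (i : ℕ) → a i = 0) :
    ppow (evolMul sqZ4) a (2 * t + 2) = 0 := by
  set c := ppow (evolMul sqZ4) a (2 * t + 1) with hc
  have e : ppow (evolMul sqZ4) a (2 * t + 2) = evolMul sqZ4 c a := rfl
  have term : ∀ q : ℕ+, c q * a q = 0 := by
    intro q
    rcases le_or_gt (q : ℕ) t with h | h
    · rw [L1 t a q h]; ring
    · rw [ha q h]; ring
  rw [e]
  ext j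
  rw [Finsupp.zero_apply]
  rcases pnat_cases j with h | ⟨p, h⟩ <;> subst h
  · rw [mulA_one, term]; ring
  · rw [mulA_succ, term, term]; ring

/-- In the evolution algebra over `ℤ/4ℤ` with
`x_i·x_i = 2x_i + x_{i+1}`, if `a = ∑_{1 ≤ i ≤ t} a_i x_i` is supported on the
first `t` basis elements (i.e. `a i = 0` for `i > t`), then `a^{2t+2} = 0`.
In particular `A` is nil: every element has a vanishing principal power. -/
theorem example_Z4_nil :
    (∀ (t : ℕ) (a : ℕ+ →₀ ZMod 4), (∀ i : ℕ+, t < (i : ℕ) → a i = 0) →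
        ppow (evolMul sqZ4) a (2 * t + 2) = 0) ∧
    (∀ a : ℕ+ →₀ ZMod 4, ∃ n : ℕ, 1 ≤ n ∧ ppow (evolMul sqZ4) a n = 0) := by
  refine ⟨part1, fun a => ?_⟩
  set t := a.support.sup (fun i : ℕ+ => (i : ℕ)) with ht
  refine ⟨2 * t + 2, by omega, part1 t a ?_⟩
  intro i hi
  by_contra h
  have hm : i ∈ a.support := Finsupp.mem_support_iff.mpr h
  have hle : (i : ℕ) ≤ t := Finset.le_sup (f := fun i : ℕ+ => (i : ℕ)) hm
  omega
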